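/- arXiv:2103.09763 — 4 statements merged into one kernel-verified Lean document; each statement's English description precedes it below -/
import Mathlib

section
/- Let W₁, ..., W_{n+1} ≥ 0 with ∑_j W_j > 0 and V₁, ..., V_{n+1} ∈ ℝ such that V_i ≤ V_j implies W_i ≤ W_j. Then for every t ∈ ℝ, (∑_{i=1}^{n+1} W_i · 1{V_i ≤ t}) / (∑_{j=1}^{n+1} W_j) ≤ (∑_{i=1}^{n+1} 1{V_i ≤ t}) / (n+1). Consequently, Quantile(1-α; ∑_i (W_i/∑_j W_j) δ_{V_i}) ≥ Quantile(1-α; (1/(n+1)) ∑_i δ_{V_i}) for every α ∈ (0,1). -/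
open Finset

/-- If the nonnegative weights `W i` are non-decreasing in the scores `V i`, then the
weighted empirical CDF of the scores is dominated by the unweighted one; consequently
the `(1-α)`-quantile of the weighted empirical distribution is at least that of the
uniform empirical distribution, quantiles being `Quantile(p; Q) = sup {z | Q(-∞, z] < p}`. -/
theorem weighted_empirical_cdf_dominated_and_quantile (n : ℕ)
    (W V : Fin (n + 1) → ℝ) (hW : ∀ i, 0 ≤ W i)
    (hmono : ∀ i j, V i ≤ V j → W i ≤ W j)
    (hsum : 0 < ∑ j, W j)
    (α : ℝ) (hα : α ∈ Set.Ioo (0 : ℝ) 1) :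
    (∀ t : ℝ,
      (∑ i, W i * (if V i ≤ t then (1 : ℝ) else 0)) / (∑ j, W j) ≤
        (∑ i, (if V i ≤ t then (1 : ℝ) else 0)) / (n + 1)) ∧
      sSup {z : ℝ |
          (∑ i, W i * (if V i ≤ z then (1 : ℝ) else 0)) / (∑ j, W j) < 1 - α} ≥
        sSup {z : ℝ |
          (∑ i, (if V i ≤ z then (1 : ℝ) else 0)) / (n + 1) < 1 - α} := by
  obtain ⟨hα0, hα1⟩ := hα
  have hcdf : ∀ t : ℝ,
      (∑ i, W i * (if V i ≤ t then (1 : ℝ) else 0)) / (∑ j, W j) ≤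
        (∑ i, (if V i ≤ t then (1 : ℝ) else 0)) / (n + 1) := by
    intro t
    set s : Finset (Fin (n + 1)) := univ.filter (fun i => V i ≤ t) with hs
    have h1 : (∑ i, W i * (if V i ≤ t then (1 : ℝ) else 0)) = ∑ i ∈ s, W i := by
      rw [hs, Finset.sum_filter]
      simp [mul_ite]
    have h2 : (∑ i, (if V i ≤ t then (1 : ℝ) else 0)) = (s.card : ℝ) := by
      simp [hs, Finset.sum_boole]
    have key : (sᶜ.card : ℝ) * ∑ i ∈ s, W i ≤ (s.card : ℝ) * ∑ j ∈ sᶜ, W j := by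
      have h3 : ∑ i ∈ s, ∑ _j ∈ sᶜ, W i ≤ ∑ _i ∈ s, ∑ j ∈ sᶜ, W j := by
        apply Finset.sum_le_sum
        intro i hi
        apply Finset.sum_le_sum
        intro j hj
        apply hmono
        have hiV : V i ≤ t := (Finset.mem_filter.mp hi).2
        have hjV : ¬ V j ≤ t := by
          have := Finset.mem_compl.mp hj
          simpa [hs] using this
        linarith [lt_of_not_ge hjV]
      have h4 := h3
      simp only [Finset.sum_const, nsmul_eq_mul] at h4
      rw [← Finset.mul_sum] at h4
      linarith
    have hsplit : ∑ i ∈ s, W i + ∑ j ∈ sᶜ, W j = ∑ j, W j :=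
      Finset.sum_add_sum_compl s W
    have hcard : (s.card : ℝ) + (sᶜ.card : ℝ) = (n : ℝ) + 1 := by
      have h : s.card + sᶜ.card = n + 1 := by
        simpa using Finset.card_add_card_compl s
      exact_mod_cast h
    rw [h1, h2, div_le_div_iff₀ hsum (by positivity), ← hcard, ← hsplit]
    nlinarith [key]
  refine ⟨hcdf, ?_⟩
  have hne : (univ : Finset (Fin (n + 1))).Nonempty := univ_nonempty
  set M := univ.sup' hne V with hM
  have hAbdd : BddAbove {z : ℝ |
      (∑ i, W i * (if V i ≤ z then (1 : ℝ) else 0)) / (∑ j, W j) < 1 - α} := by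
    refine ⟨M, fun z hz => ?_⟩
    by_contra h
    push_neg at h
    have hall : ∀ i, V i ≤ z := fun i =>
      le_trans (Finset.le_sup' V (mem_univ i)) h.le
    have hzz : (∑ i, W i * (if V i ≤ z then (1 : ℝ) else 0)) = ∑ j, W j := by
      simp [hall]
    have hz' : (∑ j, W j) / (∑ j, W j) < 1 - α := by
      have := hz
      simp only [Set.mem_setOf_eq] at this
      rwa [hzz] at this
    rw [div_self (ne_of_gt hsum)] at hz'
    linarith
  have hBne : Set.Nonempty {z : ℝ |
      (∑ i, (if V i ≤ z then (1 : ℝ) else 0)) / (n + 1) < 1 - α} := by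
    refine ⟨univ.inf' hne V - 1, ?_⟩
    have hnone : ∀ i, ¬ V i ≤ univ.inf' hne V - 1 := by
      intro i
      have := Finset.inf'_le V (mem_univ i)
      intro hle
      linarith
    simp only [Set.mem_setOf_eq]
    have : (∑ i, (if V i ≤ univ.inf' hne V - 1 then (1 : ℝ) else 0)) = 0 := by
      simp [hnone]
    rw [this, zero_div]
    linarith
  exact csSup_le_csSup hAbdd hBne (fun z hz => lt_of_le_of_lt (hcdf z) hz)
end

section
/- Let P and Q be probability measures on the same space with total-variation distance d_TV(P, Q) ≤ ε. Then the total-variation distance between the n-fold product measures satisfies d_TV(P^n, Q^n) ≤ sqrt(2 - 2(1 - ε)^n). -/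
open MeasureTheory
open scoped ENNReal

-- analytic lemma: Bonferroni-type bound
lemma bonf (ε : ℝ) (hε0 : 0 ≤ ε) (hε : ε ≤ 1) : ∀ n : ℕ,
    (1 - ε) ^ n ≤ 1 - n * ε + (n : ℝ) ^ 2 * ε ^ 2 / 2 := by
  intro n
  induction n with
  | zero => simp
  | succ n ih =>
    have h1 : (0:ℝ) ≤ 1 - ε := by linarith
    push_cast
    rw [pow_succ]
    nlinarith [mul_le_mul_of_nonneg_right ih h1, sq_nonneg ε,
      mul_nonneg (mul_nonneg (mul_nonneg (Nat.cast_nonneg (α := ℝ) n) (Nat.cast_nonneg (α := ℝ) n)) hε0) (mul_nonneg hε0 hε0)]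

-- key ennreal lemma
lemma key {𝓧 : Type*} [MeasurableSpace 𝓧]
    (P Q : Measure 𝓧) [IsProbabilityMeasure P] [IsProbabilityMeasure Q]
    (ε' : ℝ≥0∞) (h : ∀ A : Set 𝓧, MeasurableSet A → P A ≤ Q A + ε') :
    ∀ n : ℕ, ∀ B : Set (Fin n → 𝓧), MeasurableSet B →
      (Measure.pi fun _ : Fin n => P) B ≤ (Measure.pi fun _ : Fin n => Q) B + n * ε' := by
  intro n
  induction n with
  | zero =>
    intro B hB
    rcases Set.eq_empty_or_nonempty B with rfl | ⟨x, hx⟩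
    · simp
    · have : B = Set.univ := Set.eq_univ_of_forall fun y => by
        have : y = x := Subsingleton.elim y x
        rwa [this]
      subst this
      simp
  | succ n ih =>
    intro B hB
    set e := MeasurableEquiv.piFinSuccAbove (fun _ : Fin (n + 1) => 𝓧) 0 with he
    set S := e.symm ⁻¹' B with hS
    have hSm : MeasurableSet S := e.symm.measurable hB
    have hpre : e ⁻¹' S = B := by
      simp [hS, Set.preimage_preimage]
    have hP : (Measure.pi fun _ : Fin (n+1) => P) B
        = (P.prod (Measure.pi fun _ : Fin n => P)) S := by
      rw [← hpre]
      exact (measurePreserving_piFinSuccAbove (fun _ => P) 0).measure_preimage_equiv S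
    have hQ : (Measure.pi fun _ : Fin (n+1) => Q) B
        = (Q.prod (Measure.pi fun _ : Fin n => Q)) S := by
      rw [← hpre]
      exact (measurePreserving_piFinSuccAbove (fun _ => Q) 0).measure_preimage_equiv S
    rw [hP, hQ]
    have step1 : (P.prod (Measure.pi fun _ : Fin n => P)) S
        ≤ (P.prod (Measure.pi fun _ : Fin n => Q)) S + n * ε' := by
      rw [Measure.prod_apply hSm, Measure.prod_apply hSm]
      calc ∫⁻ x, (Measure.pi fun _ : Fin n => P) (Prod.mk x ⁻¹' S) ∂P
          ≤ ∫⁻ x, ((Measure.pi fun _ : Fin n => Q) (Prod.mk x ⁻¹' S) + n * ε') ∂P := by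
            refine lintegral_mono fun x => ih _ (measurable_prodMk_left hSm)
        _ = ∫⁻ x, (Measure.pi fun _ : Fin n => Q) (Prod.mk x ⁻¹' S) ∂P + n * ε' := by
            rw [lintegral_add_right _ measurable_const, lintegral_const,
              measure_univ, mul_one]
    have step2 : (P.prod (Measure.pi fun _ : Fin n => Q)) S
        ≤ (Q.prod (Measure.pi fun _ : Fin n => Q)) S + ε' := by
      rw [Measure.prod_apply_symm hSm, Measure.prod_apply_symm hSm]
      calc ∫⁻ y, P ((fun x => (x, y)) ⁻¹' S) ∂(Measure.pi fun _ : Fin n => Q)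
          ≤ ∫⁻ y, (Q ((fun x => (x, y)) ⁻¹' S) + ε') ∂(Measure.pi fun _ : Fin n => Q) := by
            refine lintegral_mono fun y => h _ (measurable_prodMk_right hSm)
        _ = ∫⁻ y, Q ((fun x => (x, y)) ⁻¹' S) ∂(Measure.pi fun _ : Fin n => Q) + ε' := by
            rw [lintegral_add_right _ measurable_const, lintegral_const,
              measure_univ, mul_one]
    calc (P.prod (Measure.pi fun _ : Fin n => P)) S
        ≤ (P.prod (Measure.pi fun _ : Fin n => Q)) S + n * ε' := step1
      _ ≤ (Q.prod (Measure.pi fun _ : Fin n => Q)) S + ε' + n * ε' := by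
          exact add_le_add_left step2 _
      _ = (Q.prod (Measure.pi fun _ : Fin n => Q)) S + (n + 1 : ℕ) * ε' := by push_cast; ring

lemma half_bound (ε : ℝ) (hε0 : 0 ≤ ε) (hε : ε ≤ 1) (n : ℕ) (h1 : 1 ≤ n * ε) :
    (1 - ε) ^ n ≤ 1 / 2 := by
  have ht : (0:ℝ) ≤ 1 - ε := by linarith
  have h2 : 1 - ε ≤ Real.exp (-ε) := by
    have := Real.add_one_le_exp (-ε); linarith
  have h3 : (1 - ε) ^ n ≤ Real.exp (-ε) ^ n := pow_le_pow_left₀ ht h2 n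
  have h4 : Real.exp (-ε) ^ n = Real.exp (n * (-ε)) := (Real.exp_nat_mul _ n).symm
  have h5 : Real.exp (n * (-ε)) ≤ Real.exp (-1) := by
    apply Real.exp_le_exp.mpr; nlinarith
  have h6 : Real.exp (-1) ≤ 1 / 2 := by
    rw [Real.exp_neg]
    have h7 : (2:ℝ) ≤ Real.exp 1 := by have := Real.add_one_le_exp 1; linarith
    rw [one_div]
    exact inv_anti₀ (by norm_num) h7
  calc (1 - ε) ^ n ≤ Real.exp (-ε) ^ n := h3
    _ = Real.exp (n * (-ε)) := h4
    _ ≤ Real.exp (-1) := h5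
    _ ≤ 1 / 2 := h6

/-- Tensorization of total variation: if `d_TV(P, Q) ≤ ε` then
`d_TV(P^n, Q^n) ≤ sqrt (2 - 2 (1 - ε)^n)`. -/
theorem tv_tensorization
    {𝓧 : Type*} [MeasurableSpace 𝓧]
    (P Q : Measure 𝓧) [IsProbabilityMeasure P] [IsProbabilityMeasure Q]
    (n : ℕ) (ε : ℝ) (hε : ε ≤ 1)
    (hTV : ∀ A : Set 𝓧, MeasurableSet A → |(P A).toReal - (Q A).toReal| ≤ ε) :
    ∀ B : Set (Fin n → 𝓧), MeasurableSet B →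
      |((Measure.pi fun _ : Fin n => P) B).toReal -
          ((Measure.pi fun _ : Fin n => Q) B).toReal| ≤
        Real.sqrt (2 - 2 * (1 - ε) ^ n) := by
  intro B hB
  have hε0 : 0 ≤ ε := by simpa using hTV ∅ MeasurableSet.empty
  have hdir : ∀ A : Set 𝓧, MeasurableSet A → P A ≤ Q A + ENNReal.ofReal ε := by
    intro A hA
    have h := (abs_le.mp (hTV A hA)).2
    rw [← ENNReal.ofReal_toReal (measure_ne_top P A),
      ← ENNReal.ofReal_toReal (measure_ne_top Q A),
      ← ENNReal.ofReal_add ENNReal.toReal_nonneg hε0]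
    exact ENNReal.ofReal_le_ofReal (by linarith)
  have hdir' : ∀ A : Set 𝓧, MeasurableSet A → Q A ≤ P A + ENNReal.ofReal ε := by
    intro A hA
    have h := (abs_le.mp (hTV A hA)).1
    rw [← ENNReal.ofReal_toReal (measure_ne_top Q A),
      ← ENNReal.ofReal_toReal (measure_ne_top P A),
      ← ENNReal.ofReal_add ENNReal.toReal_nonneg hε0]
    exact ENNReal.ofReal_le_ofReal (by linarith)
  have k1 := key P Q (ENNReal.ofReal ε) hdir n B hB
  have k2 := key Q P (ENNReal.ofReal ε) hdir' n B hB
  set x := ((Measure.pi fun _ : Fin n => P) B).toReal with hx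
  set y := ((Measure.pi fun _ : Fin n => Q) B).toReal with hy
  have hne : ∀ (μ : Measure (Fin n → 𝓧)) [IsProbabilityMeasure μ],
      (μ B + (n : ℝ≥0∞) * ENNReal.ofReal ε) ≠ ⊤ := by
    intro μ _
    exact ENNReal.add_ne_top.mpr ⟨measure_ne_top μ B,
      ENNReal.mul_ne_top (ENNReal.natCast_ne_top n) ENNReal.ofReal_ne_top⟩
  have hrhs : ∀ (μ : Measure (Fin n → 𝓧)) [IsProbabilityMeasure μ],
      (μ B + (n : ℝ≥0∞) * ENNReal.ofReal ε).toReal = (μ B).toReal + n * ε := by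
    intro μ _
    rw [ENNReal.toReal_add (measure_ne_top μ B)
        (ENNReal.mul_ne_top (ENNReal.natCast_ne_top n) ENNReal.ofReal_ne_top),
      ENNReal.toReal_mul, ENNReal.toReal_natCast, ENNReal.toReal_ofReal hε0]
  have hk1 : x ≤ y + n * ε := by
    have := ENNReal.toReal_mono (hne _) k1
    rwa [hrhs] at this
  have hk2 : y ≤ x + n * ε := by
    have := ENNReal.toReal_mono (hne _) k2
    rwa [hrhs] at this
  have hx0 : 0 ≤ x := ENNReal.toReal_nonneg
  have hy0 : 0 ≤ y := ENNReal.toReal_nonneg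
  have hx1 : x ≤ 1 := by
    rw [hx]; exact ENNReal.toReal_le_of_le_ofReal one_pos.le (by simpa using prob_le_one)
  have hy1 : y ≤ 1 := by
    rw [hy]; exact ENNReal.toReal_le_of_le_ofReal one_pos.le (by simpa using prob_le_one)
  rw [← Real.sqrt_sq_eq_abs]
  apply Real.sqrt_le_sqrt
  have hn0 : (0:ℝ) ≤ n := Nat.cast_nonneg n
  rcases le_or_gt ((n : ℝ) * ε) 1 with hcase | hcase
  · have hb := bonf ε hε0 hε n
    nlinarith [mul_nonneg hn0 hε0]
  · have hhalf := half_bound ε hε0 hε n hcase.le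
    nlinarith
end

section
/- Let Z₁, ..., Z_n be independent mean-zero random variables with E|Z_i|^{1+δ} < ∞ for some δ ∈ [0, 1). Then E|∑_{i=1}^n Z_i|^{1+δ} ≤ 2 ∑_{i=1}^n E|Z_i|^{1+δ}. -/
open MeasureTheory


lemma vbe_hasDerivAt_abs_rpow {p : ℝ} (hp : 1 < p) (t : ℝ) :
    HasDerivAt (fun s : ℝ => |s| ^ p) (p * Real.sign t * |t| ^ (p - 1)) t := by
  rcases lt_trichotomy t 0 with ht | rfl | ht
  · have h1 : HasDerivAt (fun u : ℝ => u ^ p) (p * (-t) ^ (p - 1)) (-t) :=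
      Real.hasDerivAt_rpow_const (Or.inl (by linarith))
    have h2 : HasDerivAt (fun s : ℝ => (-s) ^ p) (p * (-t) ^ (p - 1) * (-1)) t := by
      simpa [Function.comp_def] using h1.comp t (hasDerivAt_neg t)
    have h3 : (fun s : ℝ => |s| ^ p) =ᶠ[nhds t] fun s : ℝ => (-s) ^ p := by
      filter_upwards [Iio_mem_nhds ht] with s hs
      rw [abs_of_neg hs]
    have h4 := h2.congr_of_eventuallyEq h3
    refine h4.congr_deriv ?_
    rw [Real.sign_of_neg ht, abs_of_neg ht]
    ring
  · have hs0 : Real.sign (0 : ℝ) = 0 := Real.sign_zero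
    rw [hs0, mul_zero, zero_mul]
    rw [hasDerivAt_iff_tendsto_slope]
    apply squeeze_zero_norm' (a := fun s : ℝ => |s| ^ (p - 1))
    · filter_upwards [self_mem_nhdsWithin] with s hs
      have hs' : s ≠ 0 := hs
      have h0 : |(0:ℝ)| ^ p = 0 := by
        rw [abs_zero, Real.zero_rpow (by linarith)]
      rw [slope_def_field, h0, sub_zero, sub_zero, Real.norm_eq_abs, abs_div,
        abs_of_nonneg (Real.rpow_nonneg (abs_nonneg s) p),
        Real.rpow_sub (abs_pos.2 hs'), Real.rpow_one]
    · have hc : Continuous fun s : ℝ => |s| ^ (p - 1) :=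
        (Real.continuous_rpow_const (by linarith)).comp continuous_abs
      have := hc.tendsto 0
      rw [show |(0:ℝ)| ^ (p - 1) = 0 by
        rw [abs_zero, Real.zero_rpow (by linarith)]] at this
      exact this.mono_left nhdsWithin_le_nhds
  · have h1 : HasDerivAt (fun u : ℝ => u ^ p) (p * t ^ (p - 1)) t :=
      Real.hasDerivAt_rpow_const (Or.inl (ne_of_gt ht))
    have h3 : (fun s : ℝ => |s| ^ p) =ᶠ[nhds t] fun s : ℝ => s ^ p := by
      filter_upwards [Ioi_mem_nhds ht] with s hs
      rw [abs_of_pos hs]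
    have h4 := h1.congr_of_eventuallyEq h3
    refine h4.congr_deriv ?_
    rw [Real.sign_of_pos ht, abs_of_pos ht]
    ring

lemma vbe_rpow_subadd {q : ℝ} (hq0 : 0 ≤ q) (hq1 : q ≤ 1) {x y : ℝ} (hx : 0 ≤ x) (hy : 0 ≤ y) :
    (x + y) ^ q ≤ x ^ q + y ^ q := by
  have h := NNReal.rpow_add_le_add_rpow x.toNNReal y.toNNReal hq0 hq1
  have h2 := NNReal.coe_le_coe.2 h
  push_cast [NNReal.coe_rpow] at h2
  rwa [Real.coe_toNNReal x hx, Real.coe_toNNReal y hy] at h2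


lemma vbe_pointwise_pos {p : ℝ} (hp1 : 1 < p) (hp2 : p ≤ 2) {x : ℝ} (hx : 0 < x) (y : ℝ) :
    |x + y| ^ p ≤ x ^ p + p * x ^ (p - 1) * y + 2 * |y| ^ p := by
  have hq0 : 0 < p - 1 := by linarith
  have hq1 : p - 1 ≤ 1 := by linarith
  have hp0 : (0:ℝ) < p := by linarith
  set h : ℝ → ℝ := fun z => x ^ p + p * x ^ (p - 1) * z + 2 * |z| ^ p - |x + z| ^ p with hh
  have hder : ∀ z : ℝ, HasDerivAt h
      (p * x ^ (p - 1) + 2 * (p * Real.sign z * |z| ^ (p - 1))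
        - p * Real.sign (x + z) * |x + z| ^ (p - 1)) z := by
    intro z
    have d1 : HasDerivAt (fun z : ℝ => x ^ p + p * x ^ (p - 1) * z) (p * x ^ (p - 1)) z := by
      simpa using ((hasDerivAt_id z).const_mul (p * x ^ (p - 1))).const_add (x ^ p)
    have d2 : HasDerivAt (fun z : ℝ => 2 * |z| ^ p)
        (2 * (p * Real.sign z * |z| ^ (p - 1))) z :=
      (vbe_hasDerivAt_abs_rpow hp1 z).const_mul 2
    have d3 : HasDerivAt (fun z : ℝ => |x + z| ^ p)
        (p * Real.sign (x + z) * |x + z| ^ (p - 1)) z := by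
      have := (vbe_hasDerivAt_abs_rpow hp1 (x + z)).comp z ((hasDerivAt_id z).const_add x)
      simpa [Function.comp_def] using this
    exact (d1.add d2).sub d3
  have hcont : Continuous h := continuous_iff_continuousAt.2 fun z => (hder z).continuousAt
  have hmono : MonotoneOn h (Set.Ici 0) := by
    apply monotoneOn_of_deriv_nonneg (convex_Ici 0) hcont.continuousOn
      (fun z hz => (hder z).differentiableAt.differentiableWithinAt)
    intro z hz
    rw [interior_Ici] at hz
    have hz0 : 0 < z := hz
    have hxz : 0 < x + z := by linarith
    rw [(hder z).deriv, Real.sign_of_pos hz0, Real.sign_of_pos hxz,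
      abs_of_pos hz0, abs_of_pos hxz]
    have hsub : (x + z) ^ (p - 1) ≤ x ^ (p - 1) + z ^ (p - 1) :=
      vbe_rpow_subadd hq0.le hq1 hx.le hz0.le
    have hzq : (0:ℝ) ≤ z ^ (p - 1) := Real.rpow_nonneg hz0.le _
    nlinarith [mul_le_mul_of_nonneg_left hsub hp0.le,
      mul_nonneg hp0.le hzq]
  have hanti : AntitoneOn h (Set.Iic 0) := by
    apply antitoneOn_of_deriv_nonpos (convex_Iic 0) hcont.continuousOn
      (fun z hz => (hder z).differentiableAt.differentiableWithinAt)
    intro z hz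
    rw [interior_Iic] at hz
    have hz0 : z < 0 := hz
    rw [(hder z).deriv, Real.sign_of_neg hz0, abs_of_neg hz0]
    have key : x ^ (p - 1) ≤ 2 * (-z) ^ (p - 1)
        + Real.sign (x + z) * |x + z| ^ (p - 1) := by
      rcases lt_trichotomy (x + z) 0 with hxz | hxz | hxz
      · rw [Real.sign_of_neg hxz, abs_of_neg hxz]
        have h1 : x ^ (p - 1) ≤ (-z) ^ (p - 1) :=
          Real.rpow_le_rpow hx.le (by linarith) hq0.le
        have h2 : (-(x + z)) ^ (p - 1) ≤ (-z) ^ (p - 1) :=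
          Real.rpow_le_rpow (by linarith) (by linarith) hq0.le
        linarith
      · have hzx : -z = x := by linarith
        rw [hxz, Real.sign_zero, abs_zero, zero_mul, add_zero, hzx]
        have : (0:ℝ) ≤ x ^ (p - 1) := Real.rpow_nonneg hx.le _
        linarith
      · rw [Real.sign_of_pos hxz, abs_of_pos hxz, one_mul]
        have h1 : ((x + z) + (-z)) ^ (p - 1) ≤ (x + z) ^ (p - 1) + (-z) ^ (p - 1) :=
          vbe_rpow_subadd hq0.le hq1 hxz.le (by linarith)
        have h2 : (x + z) + (-z) = x := by ring
        rw [h2] at h1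
        have : (0:ℝ) ≤ (-z) ^ (p - 1) := Real.rpow_nonneg (by linarith) _
        linarith
    nlinarith [mul_le_mul_of_nonneg_left key hp0.le]
  have h0 : h 0 = 0 := by
    simp [hh, abs_of_pos hx, Real.zero_rpow (ne_of_gt hp0)]
  have hfin : 0 ≤ h y := by
    rcases le_or_gt 0 y with hy | hy
    · have := hmono Set.self_mem_Ici hy hy
      linarith
    · have := hanti hy.le Set.self_mem_Iic hy.le
      linarith
  simp only [hh] at hfin
  linarith


lemma vbe_pointwise {p : ℝ} (hp1 : 1 < p) (hp2 : p ≤ 2) (x y : ℝ) :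
    |x + y| ^ p ≤ |x| ^ p + (p * Real.sign x * |x| ^ (p - 1)) * y + 2 * |y| ^ p := by
  rcases lt_trichotomy x 0 with hx | rfl | hx
  · have h := vbe_pointwise_pos hp1 hp2 (neg_pos.2 hx) (-y)
    rw [show -x + -y = -(x + y) by ring, abs_neg, abs_neg] at h
    rw [Real.sign_of_neg hx, abs_of_neg hx]
    nlinarith [h]
  · rw [Real.sign_zero, abs_zero, Real.zero_rpow (by positivity : p ≠ 0)]
    have : (0:ℝ) ≤ |y| ^ p := Real.rpow_nonneg (abs_nonneg y) p
    simp only [zero_add, mul_zero, zero_mul]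
    linarith
  · have h := vbe_pointwise_pos hp1 hp2 hx y
    rw [Real.sign_of_pos hx, abs_of_pos hx]
    nlinarith [h]

lemma vbe_crude {p : ℝ} (hp : 1 ≤ p) (x y : ℝ) :
    |x + y| ^ p ≤ 2 ^ p * (|x| ^ p + |y| ^ p) := by
  have h1 : |x + y| ^ p ≤ (|x| + |y|) ^ p :=
    Real.rpow_le_rpow (abs_nonneg _) (abs_add_le x y) (by linarith)
  have h2 : |x| + |y| ≤ 2 * max |x| |y| := by
    rcases le_total |x| |y| with h | h
    · rw [max_eq_right h]; linarith
    · rw [max_eq_left h]; linarith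
  have h3 : (|x| + |y|) ^ p ≤ (2 * max |x| |y|) ^ p :=
    Real.rpow_le_rpow (by positivity) h2 (by linarith)
  have h4 : (2 * max |x| |y|) ^ p = 2 ^ p * (max |x| |y|) ^ p :=
    Real.mul_rpow (by norm_num) (le_max_of_le_left (abs_nonneg x))
  have h5 : (max |x| |y|) ^ p ≤ |x| ^ p + |y| ^ p := by
    rcases le_total |x| |y| with h | h
    · rw [max_eq_right h]
      nlinarith [Real.rpow_nonneg (abs_nonneg x) p]
    · rw [max_eq_left h]
      nlinarith [Real.rpow_nonneg (abs_nonneg y) p]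
  calc |x + y| ^ p ≤ (2 * max |x| |y|) ^ p := le_trans h1 h3
    _ = 2 ^ p * (max |x| |y|) ^ p := h4
    _ ≤ 2 ^ p * (|x| ^ p + |y| ^ p) :=
        mul_le_mul_of_nonneg_left h5 (Real.rpow_nonneg (by norm_num) p)

lemma vbe_integrable_add {Ω : Type*} [MeasurableSpace Ω] {μ : Measure Ω}
    {X Y : Ω → ℝ} (hXm : Measurable X) (hYm : Measurable Y)
    {p : ℝ} (hp : 1 ≤ p)
    (hXp : Integrable (fun ω => |X ω| ^ p) μ) (hYp : Integrable (fun ω => |Y ω| ^ p) μ) :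
    Integrable (fun ω => |X ω + Y ω| ^ p) μ := by
  have hb : Integrable (fun ω => 2 ^ p * (|X ω| ^ p + |Y ω| ^ p)) μ :=
    (hXp.add hYp).const_mul _
  refine hb.mono' ?_ (ae_of_all _ fun ω => ?_)
  · exact (((Real.continuous_rpow_const (by linarith)).measurable).comp
      ((hXm.add hYm).abs)).aestronglyMeasurable
  · rw [Real.norm_eq_abs, abs_of_nonneg (Real.rpow_nonneg (abs_nonneg _) p)]
    exact vbe_crude hp _ _


lemma vbe_measurable_sign : Measurable Real.sign := by
  have h : Real.sign = fun r : ℝ => if r < 0 then (-1 : ℝ) else if 0 < r then 1 else 0 := rfl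
  rw [h]
  exact Measurable.ite (measurableSet_lt measurable_id measurable_const) measurable_const
    (Measurable.ite (measurableSet_lt measurable_const measurable_id)
      measurable_const measurable_const)

lemma vbe_step {Ω : Type*} [MeasurableSpace Ω] {μ : Measure Ω} [IsProbabilityMeasure μ]
    {X Y : Ω → ℝ} (hXm : Measurable X) (hYm : Measurable Y)
    (hindep : ProbabilityTheory.IndepFun X Y μ)
    {p : ℝ} (hp1 : 1 < p) (hp2 : p ≤ 2)
    (hXi : Integrable X μ) (hYi : Integrable Y μ) (hYmean : ∫ ω, Y ω ∂μ = 0)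
    (hXp : Integrable (fun ω => |X ω| ^ p) μ) (hYp : Integrable (fun ω => |Y ω| ^ p) μ) :
    ∫ ω, |X ω + Y ω| ^ p ∂μ ≤ ∫ ω, |X ω| ^ p ∂μ + 2 * ∫ ω, |Y ω| ^ p ∂μ := by
  have hp0 : (0:ℝ) < p := by linarith
  have hq0 : (0:ℝ) < p - 1 := by linarith
  set g : ℝ → ℝ := fun x => p * Real.sign x * |x| ^ (p - 1) with hg
  have gmeas : Measurable g :=
    (measurable_const.mul vbe_measurable_sign).mul
      (((Real.continuous_rpow_const hq0.le).measurable).comp measurable_abs)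
  -- |g x| ≤ p * (1 + |x|)
  have habs : ∀ x : ℝ, |g x| ≤ p * (1 + |x|) := by
    intro x
    have h1 : |Real.sign x| ≤ 1 := by
      rcases Real.sign_apply_eq x with h | h | h <;> rw [h] <;> norm_num
    have h2 : |x| ^ (p - 1) ≤ 1 + |x| := by
      rcases le_total |x| 1 with h | h
      · have := Real.rpow_le_one (abs_nonneg x) h hq0.le
        linarith [abs_nonneg x]
      · have := Real.rpow_le_rpow_of_exponent_le h (by linarith : p - 1 ≤ 1)
        rw [Real.rpow_one] at this
        linarith
    have heq : |g x| = p * |Real.sign x| * |x| ^ (p - 1) := by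
      rw [hg, abs_mul, abs_mul, abs_of_pos hp0,
        abs_of_nonneg (Real.rpow_nonneg (abs_nonneg x) _)]
    rw [heq]
    have hs0 : (0:ℝ) ≤ |Real.sign x| := abs_nonneg _
    nlinarith [Real.rpow_nonneg (abs_nonneg x) (p - 1), abs_nonneg x,
      mul_le_mul_of_nonneg_left h1 hp0.le]
  have hgX : Integrable (fun ω => g (X ω)) μ := by
    refine Integrable.mono' (((integrable_const (1:ℝ)).add hXi.abs).const_mul p)
      ((gmeas.comp hXm).aestronglyMeasurable) (ae_of_all _ fun ω => ?_)
    rw [Real.norm_eq_abs]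
    exact habs _
  have indep' : ProbabilityTheory.IndepFun (fun ω => g (X ω)) Y μ :=
    hindep.comp gmeas measurable_id
  have hmul : Integrable (fun ω => g (X ω) * Y ω) μ := by
    have := indep'.integrable_mul hgX hYi
    exact this
  have hzero : ∫ ω, g (X ω) * Y ω ∂μ = 0 := by
    rw [indep'.integral_fun_mul_eq_mul_integral (gmeas.comp hXm).aestronglyMeasurable
      hYm.aestronglyMeasurable, hYmean, mul_zero]
  have hLp : Integrable (fun ω => |X ω + Y ω| ^ p) μ :=
    vbe_integrable_add hXm hYm hp1.le hXp hYp
  have hRp : Integrable (fun ω => |X ω| ^ p + g (X ω) * Y ω + 2 * |Y ω| ^ p) μ :=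
    (hXp.add hmul).add (hYp.const_mul 2)
  have hmono := integral_mono hLp hRp
    (fun ω => vbe_pointwise hp1 hp2 (X ω) (Y ω))
  have e1 : ∫ a, (|X a| ^ p + g (X a) * Y a) ∂μ
      = (∫ a, |X a| ^ p ∂μ) + ∫ a, g (X a) * Y a ∂μ := integral_add hXp hmul
  have e2 : ∫ a, (|X a| ^ p + g (X a) * Y a + 2 * |Y a| ^ p) ∂μ
      = (∫ a, (|X a| ^ p + g (X a) * Y a) ∂μ) + ∫ a, 2 * |Y a| ^ p ∂μ :=
    integral_add (hXp.add hmul) (hYp.const_mul 2)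
  have e3 : ∫ a, 2 * |Y a| ^ p ∂μ = 2 * ∫ a, |Y a| ^ p ∂μ := integral_const_mul 2 _
  rw [e2, e1, e3, hzero] at hmono
  linarith


/-- The von Bahr–Esseen inequality: for independent mean-zero random variables with
finite `(1+δ)`-th moments, `δ ∈ [0, 1)`,
`E|∑ Z_i|^{1+δ} ≤ 2 ∑ E|Z_i|^{1+δ}`. -/
theorem von_bahr_esseen
    {Ω : Type*} [MeasurableSpace Ω] (μ : Measure Ω) [IsProbabilityMeasure μ]
    (n : ℕ) (Z : Fin n → Ω → ℝ) (hZm : ∀ i, Measurable (Z i))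
    (hindep : ProbabilityTheory.iIndepFun Z μ)
    (δ : ℝ) (hδ0 : 0 ≤ δ) (hδ1 : δ < 1)
    (hint : ∀ i, Integrable (Z i) μ)
    (hmean : ∀ i, ∫ ω, Z i ω ∂μ = 0)
    (hmom : ∀ i, Integrable (fun ω => |Z i ω| ^ (1 + δ)) μ) :
    ∫ ω, |∑ i, Z i ω| ^ (1 + δ) ∂μ ≤
      2 * ∑ i, ∫ ω, |Z i ω| ^ (1 + δ) ∂μ := by
  rcases eq_or_lt_of_le hδ0 with hδ | hδ
  · -- δ = 0 : triangle inequality suffices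
    simp only [← hδ, add_zero, Real.rpow_one]
    have h1 : ∫ ω, |∑ i, Z i ω| ∂μ ≤ ∑ i, ∫ ω, |Z i ω| ∂μ := by
      have hpt : ∀ ω, |∑ i, Z i ω| ≤ ∑ i, |Z i ω| :=
        fun ω => Finset.abs_sum_le_sum_abs _ _
      calc ∫ ω, |∑ i, Z i ω| ∂μ
          ≤ ∫ ω, ∑ i, |Z i ω| ∂μ :=
            integral_mono ((integrable_finset_sum _ fun i _ => hint i).abs)
              (integrable_finset_sum _ fun i _ => (hint i).abs) hpt
        _ = ∑ i, ∫ ω, |Z i ω| ∂μ := integral_finset_sum _ fun i _ => (hint i).abs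
    have h2 : 0 ≤ ∑ i, ∫ ω, |Z i ω| ∂μ :=
      Finset.sum_nonneg fun i _ => integral_nonneg fun ω => abs_nonneg _
    linarith
  · have hp1 : 1 < 1 + δ := by linarith
    have hp2 : 1 + δ ≤ 2 := by linarith
    have key : ∀ s : Finset (Fin n),
        Integrable (fun ω => |∑ i ∈ s, Z i ω| ^ (1 + δ)) μ ∧
        ∫ ω, |∑ i ∈ s, Z i ω| ^ (1 + δ) ∂μ ≤ 2 * ∑ i ∈ s, ∫ ω, |Z i ω| ^ (1 + δ) ∂μ := by
      intro s
      induction s using Finset.induction_on with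
      | empty =>
        constructor
        · simpa [Real.zero_rpow (by positivity : (1:ℝ) + δ ≠ 0)] using
            (integrable_const (0:ℝ))
        · simp [Real.zero_rpow (by positivity : (1:ℝ) + δ ≠ 0)]
      | @insert a s ha ih =>
        have hXm : Measurable (fun ω => ∑ i ∈ s, Z i ω) :=
          Finset.measurable_sum s fun i _ => hZm i
        have hindep' : ProbabilityTheory.IndepFun (fun ω => ∑ i ∈ s, Z i ω) (Z a) μ := by
          have h := hindep.indepFun_finsetSum_of_notMem hZm ha
          have heq : (fun ω => ∑ i ∈ s, Z i ω) = ∑ j ∈ s, Z j := by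
            ext ω; simp [Finset.sum_apply]
          rwa [heq]
        have hXi : Integrable (fun ω => ∑ i ∈ s, Z i ω) μ :=
          integrable_finset_sum s fun i _ => hint i
        have hXmean : ∫ ω, Z a ω ∂μ = 0 := hmean a
        have hstep := vbe_step hXm (hZm a) hindep' hp1 hp2 hXi (hint a) hXmean ih.1 (hmom a)
        have hsum : ∀ ω, ∑ i ∈ insert a s, Z i ω = (∑ i ∈ s, Z i ω) + Z a ω := by
          intro ω
          rw [Finset.sum_insert ha, add_comm]
        constructor
        · have h := vbe_integrable_add hXm (hZm a) hp1.le ih.1 (hmom a)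
          refine h.congr (ae_of_all _ fun ω => ?_)
          show |∑ i ∈ s, Z i ω + Z a ω| ^ (1 + δ) = |∑ i ∈ insert a s, Z i ω| ^ (1 + δ)
          rw [hsum ω]
        · have hLeq : ∫ ω, |∑ i ∈ insert a s, Z i ω| ^ (1 + δ) ∂μ
              = ∫ ω, |(∑ i ∈ s, Z i ω) + Z a ω| ^ (1 + δ) ∂μ := by
            apply integral_congr_ae
            refine ae_of_all _ fun ω => ?_
            show |∑ i ∈ insert a s, Z i ω| ^ (1 + δ) = |∑ i ∈ s, Z i ω + Z a ω| ^ (1 + δ)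
            rw [hsum ω]
          rw [hLeq, Finset.sum_insert ha]
          have h2 := ih.2
          have h3 : 0 ≤ ∫ ω, |Z a ω| ^ (1 + δ) ∂μ :=
            integral_nonneg fun ω => Real.rpow_nonneg (abs_nonneg _) _
          linarith
    simpa using (key Finset.univ).2
end

section
/- Let W₁, ..., W_n be i.i.d. nonnegative random variables with E[W_i] = 1 and (E[W_i^{1+δ}])^{1/(1+δ)} ≤ M for some δ ∈ (0, 1). Then P(∑_{i=1}^n W_i² ≥ n t) ≤ n^{(1-δ)/2} M^{1+δ} / t^{(1+δ)/2} for all t > 0, and P(|∑_{i=1}^n W_i - n| ≥ n/2) ≤ 2^{3+2δ} M^{1+δ} / n^{δ}. -/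
open MeasureTheory ProbabilityTheory Finset


lemma final_alg (N d X a : ℝ) (hN : 0 < N) (hd : 0 < d) (hX1 : 1 ≤ X) (ha : 0 < a) :
    N * (a / (N * d / (2 * X))) + N * (N * X / (2 * d) * a) / (9 * N ^ 2 / 64)
      ≤ 8 * X ^ 2 * a / d := by
  have hX0 : (0:ℝ) < X := lt_of_lt_of_le one_pos hX1
  have e : N * (a / (N * d / (2 * X))) + N * (N * X / (2 * d) * a) / (9 * N ^ 2 / 64)
      = (2 * X + 32 * X / 9) * a / d := by
    field_simp
    ring
  rw [e]
  gcongr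
  nlinarith

lemma markov_ofReal {Ω : Type*} [MeasurableSpace Ω] (μ : Measure Ω) [IsFiniteMeasure μ]
    {f : Ω → ℝ} (hf : 0 ≤ᵐ[μ] f) (hfi : Integrable f μ) {c : ℝ} (hc : 0 < c) :
    μ {ω | c ≤ f ω} ≤ ENNReal.ofReal ((∫ ω, f ω ∂μ) / c) := by
  have h := mul_meas_ge_le_integral_of_nonneg hf hfi c
  rw [← ENNReal.ofReal_toReal (measure_ne_top μ {ω | c ≤ f ω})]
  apply ENNReal.ofReal_le_ofReal
  rw [le_div_iff₀ hc]
  rw [measureReal_def] at h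
  linarith


lemma real_rpow_add_le {a b : ℝ} (ha : 0 ≤ a) (hb : 0 ≤ b) {p : ℝ} (hp0 : 0 ≤ p) (hp1 : p ≤ 1) :
    (a + b) ^ p ≤ a ^ p + b ^ p := by
  have h := NNReal.rpow_add_le_add_rpow (⟨a, ha⟩ : NNReal) (⟨b, hb⟩ : NNReal) hp0 hp1
  exact_mod_cast h

lemma rpow_sum_le_sum_rpow {ι : Type*} (s : Finset ι) (f : ι → ℝ) (hf : ∀ i ∈ s, 0 ≤ f i)
    {p : ℝ} (hp0 : 0 < p) (hp1 : p ≤ 1) :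
    (∑ i ∈ s, f i) ^ p ≤ ∑ i ∈ s, f i ^ p := by
  classical
  induction s using Finset.induction_on with
  | empty => simp [Real.zero_rpow hp0.ne']
  | insert a s hns ih =>
    rw [Finset.sum_insert hns, Finset.sum_insert hns]
    have h1 : (0:ℝ) ≤ f a := hf a (Finset.mem_insert_self a s)
    have h2 : (0:ℝ) ≤ ∑ i ∈ s, f i :=
      Finset.sum_nonneg fun i hi => hf i (Finset.mem_insert_of_mem hi)
    calc (f a + ∑ i ∈ s, f i) ^ p ≤ f a ^ p + (∑ i ∈ s, f i) ^ p :=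
            real_rpow_add_le h1 h2 hp0.le hp1
      _ ≤ f a ^ p + ∑ i ∈ s, f i ^ p := by
            gcongr
            exact ih fun i hi => hf i (Finset.mem_insert_of_mem hi)



set_option maxHeartbeats 1600000 in
/-- For i.i.d. nonnegative weights with unit mean and `(E[W^{1+δ}])^{1/(1+δ)} ≤ M`,
`δ ∈ (0,1)`: `P(∑ W_i² ≥ n t) ≤ n^{(1-δ)/2} M^{1+δ} / t^{(1+δ)/2}` for all `t > 0`,
and `P(|∑ W_i - n| ≥ n/2) ≤ 2^{3+2δ} M^{1+δ} / n^δ`. -/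
theorem weight_sum_tail_bounds
    {Ω : Type*} [MeasurableSpace Ω] (μ : Measure Ω) [IsProbabilityMeasure μ]
    (n : ℕ) (hn : 0 < n) (W : Fin n → Ω → ℝ) (hWm : ∀ i, Measurable (W i))
    (hWnn : ∀ i ω, 0 ≤ W i ω)
    (hindep : ProbabilityTheory.iIndepFun W μ)
    (hident : ∀ i j, ProbabilityTheory.IdentDistrib (W i) (W j) μ μ)
    (δ : ℝ) (hδ0 : 0 < δ) (hδ1 : δ < 1)
    (M : ℝ) (hM : 0 < M)
    (hmean : ∀ i, ∫ ω, W i ω ∂μ = 1)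
    (hmom_int : ∀ i, Integrable (fun ω => W i ω ^ (1 + δ)) μ)
    (hmom : ∀ i, (∫ ω, W i ω ^ (1 + δ) ∂μ) ^ (1 / (1 + δ)) ≤ M) :
    (∀ t : ℝ, 0 < t →
      μ {ω | (n : ℝ) * t ≤ ∑ i, W i ω ^ 2} ≤
        ENNReal.ofReal ((n : ℝ) ^ ((1 - δ) / 2) * M ^ (1 + δ) / t ^ ((1 + δ) / 2))) ∧
      μ {ω | (n : ℝ) / 2 ≤ |(∑ i, W i ω) - n|} ≤
        ENNReal.ofReal (2 ^ (3 + 2 * δ) * M ^ (1 + δ) / (n : ℝ) ^ δ) := by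
  constructor
  · have h1δ : (0:ℝ) < 1 + δ := by linarith
    have hnpos : (0:ℝ) < n := Nat.cast_pos.mpr hn
    -- moment bound
    have momle : ∀ i, ∫ ω, W i ω ^ (1 + δ) ∂μ ≤ M ^ (1 + δ) := by
      intro i
      have hint : 0 ≤ ∫ ω, W i ω ^ (1 + δ) ∂μ :=
        integral_nonneg fun ω => Real.rpow_nonneg (hWnn i ω) _
      have : ∫ ω, W i ω ^ (1 + δ) ∂μ
          = ((∫ ω, W i ω ^ (1 + δ) ∂μ) ^ (1 / (1 + δ))) ^ (1 + δ) := by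
        rw [← Real.rpow_mul hint, one_div, inv_mul_cancel₀ h1δ.ne', Real.rpow_one]
      rw [this]
      exact Real.rpow_le_rpow (Real.rpow_nonneg hint _) (hmom i) h1δ.le
    intro t ht
    set p : ℝ := (1 + δ) / 2 with hp
    have hp0 : 0 < p := by positivity
    have hp1 : p ≤ 1 := by rw [hp]; linarith
    set g : Ω → ℝ := fun ω => ∑ i, W i ω ^ (1 + δ) with hg
    have hgnn : ∀ ω, 0 ≤ g ω := fun ω =>
      Finset.sum_nonneg fun i _ => Real.rpow_nonneg (hWnn i ω) _
    have hgi : Integrable g μ := integrable_finset_sum _ fun i _ => hmom_int i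
    have hc : (0:ℝ) < ((n:ℝ) * t) ^ p := Real.rpow_pos_of_pos (by positivity) _
    have hsub : {ω | (n : ℝ) * t ≤ ∑ i, W i ω ^ 2} ⊆ {ω | ((n:ℝ)*t) ^ p ≤ g ω} := by
      intro ω hω
      simp only [Set.mem_setOf_eq] at hω ⊢
      have h2 : (∑ i, W i ω ^ 2) ^ p ≤ ∑ i, (W i ω ^ 2) ^ p :=
        rpow_sum_le_sum_rpow _ _ (fun i _ => sq_nonneg _) hp0 hp1
      have h3 : ∀ i : Fin n, (W i ω ^ 2) ^ p = W i ω ^ (1 + δ) := by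
        intro i
        rw [← Real.rpow_natCast (W i ω) 2, ← Real.rpow_mul (hWnn i ω)]
        congr 1
        rw [hp]; ring
      calc ((n:ℝ)*t) ^ p ≤ (∑ i, W i ω ^ 2) ^ p := by
            apply Real.rpow_le_rpow (by positivity) hω hp0.le
        _ ≤ ∑ i, (W i ω ^ 2) ^ p := h2
        _ = g ω := by rw [hg]; exact Finset.sum_congr rfl fun i _ => h3 i
    calc μ {ω | (n : ℝ) * t ≤ ∑ i, W i ω ^ 2} ≤ μ {ω | ((n:ℝ)*t) ^ p ≤ g ω} := measure_mono hsub
      _ ≤ ENNReal.ofReal ((∫ ω, g ω ∂μ) / ((n:ℝ)*t) ^ p) :=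
          markov_ofReal μ (Filter.Eventually.of_forall hgnn) hgi hc
      _ ≤ ENNReal.ofReal ((n : ℝ) ^ ((1 - δ) / 2) * M ^ (1 + δ) / t ^ p) := by
          apply ENNReal.ofReal_le_ofReal
          have hig : ∫ ω, g ω ∂μ ≤ (n:ℝ) * M ^ (1 + δ) := by
            rw [hg, integral_finset_sum _ fun i _ => hmom_int i]
            calc (∑ i : Fin n, ∫ ω, W i ω ^ (1+δ) ∂μ) ≤ ∑ _i : Fin n, M ^ (1+δ) :=
                  Finset.sum_le_sum fun i _ => momle i
              _ = (n:ℝ) * M ^ (1+δ) := by simp [mul_comm]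
          have hkey : (n:ℝ) * M ^ (1 + δ) / ((n:ℝ)*t) ^ p
              = (n : ℝ) ^ ((1 - δ) / 2) * M ^ (1 + δ) / t ^ p := by
            rw [Real.mul_rpow hnpos.le ht.le]
            have hnp : (0:ℝ) < (n:ℝ) ^ p := Real.rpow_pos_of_pos hnpos _
            have htp : (0:ℝ) < t ^ p := Real.rpow_pos_of_pos ht _
            have hnn : (n:ℝ) ^ ((1 - δ) / 2) * (n:ℝ) ^ p = (n:ℝ) := by
              rw [← Real.rpow_add hnpos, show (1 - δ)/2 + p = 1 by rw [hp]; ring,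
                Real.rpow_one]
            rw [div_eq_div_iff (by positivity) htp.ne']
            conv_lhs => rw [← hnn]
            ring
          rw [← hkey]
          gcongr
  · have h1δ : (0:ℝ) < 1 + δ := by linarith
    have hnpos : (0:ℝ) < n := Nat.cast_pos.mpr hn
    set A := M ^ (1 + δ) with hA
    have hA0 : 0 < A := Real.rpow_pos_of_pos hM _
    have momle : ∀ i, ∫ ω, W i ω ^ (1 + δ) ∂μ ≤ A := by
      intro i
      have hint : 0 ≤ ∫ ω, W i ω ^ (1 + δ) ∂μ :=
        integral_nonneg fun ω => Real.rpow_nonneg (hWnn i ω) _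
      have he : ∫ ω, W i ω ^ (1 + δ) ∂μ
          = ((∫ ω, W i ω ^ (1 + δ) ∂μ) ^ (1 / (1 + δ))) ^ (1 + δ) := by
        rw [← Real.rpow_mul hint, one_div, inv_mul_cancel₀ h1δ.ne', Real.rpow_one]
      rw [he]
      exact Real.rpow_le_rpow (Real.rpow_nonneg hint _) (hmom i) h1δ.le
    have hnδ : (0:ℝ) < (n:ℝ) ^ δ := Real.rpow_pos_of_pos hnpos _
    by_cases hcase : 1 ≤ 2 ^ (3 + 2 * δ) * A / (n:ℝ) ^ δ
    · calc μ {ω | (n : ℝ) / 2 ≤ |(∑ i, W i ω) - n|} ≤ 1 := prob_le_one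
        _ ≤ ENNReal.ofReal (2 ^ (3 + 2 * δ) * A / (n:ℝ) ^ δ) := by
            rw [← ENNReal.ofReal_one]; exact ENNReal.ofReal_le_ofReal hcase
    push_neg at hcase
    have hsmall : 2 ^ (3 + 2 * δ) * A < (n:ℝ) ^ δ := by
      rw [div_lt_one hnδ] at hcase; linarith [hcase]
    -- abbreviations for powers of 2
    set x := (2:ℝ) ^ δ with hx
    have hx1 : 1 ≤ x := Real.one_le_rpow one_le_two hδ0.le
    have hx2 : x ≤ 2 := by
      calc x ≤ (2:ℝ) ^ (1:ℝ) := Real.rpow_le_rpow_of_exponent_le one_le_two hδ1.le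
        _ = 2 := Real.rpow_one 2
    have h8x : (2:ℝ) ^ (3 + 2 * δ) = 8 * x ^ 2 := by
      rw [hx, ← Real.rpow_natCast ((2:ℝ)^δ) 2, ← Real.rpow_mul (by norm_num : (0:ℝ) ≤ 2),
        show (3 + 2*δ) = (3:ℝ) + δ * (2:ℕ) by push_cast; ring, Real.rpow_add two_pos,
        show (3:ℝ) = ((3:ℕ):ℝ) by norm_num, Real.rpow_natCast]
      norm_num
    -- truncation
    set K : ℝ := (n:ℝ) / 2 with hK
    have hK0 : (0:ℝ) < K := by positivity
    have hKδ : K ^ δ = (n:ℝ) ^ δ / x := by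
      rw [hK, Real.div_rpow hnpos.le (by norm_num : (0:ℝ) ≤ 2), hx]
    have hK1δ : K ^ (1 + δ) = (n:ℝ) * (n:ℝ) ^ δ / (2 * x) := by
      rw [hK, Real.div_rpow hnpos.le (by norm_num : (0:ℝ) ≤ 2),
        Real.rpow_add hnpos, Real.rpow_add two_pos, Real.rpow_one, Real.rpow_one, hx]
    have hKm : K ^ (1 - δ) = (n:ℝ) * x / (2 * (n:ℝ) ^ δ) := by
      rw [hK, Real.div_rpow hnpos.le (by norm_num : (0:ℝ) ≤ 2),
        Real.rpow_sub hnpos, Real.rpow_sub two_pos, Real.rpow_one, Real.rpow_one, hx]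
      field_simp
    have hKδ0 : (0:ℝ) < K ^ δ := Real.rpow_pos_of_pos hK0 _
    have hK1δ0 : (0:ℝ) < K ^ (1 + δ) := Real.rpow_pos_of_pos hK0 _
    have hKm0 : (0:ℝ) < K ^ (1 - δ) := Real.rpow_pos_of_pos hK0 _
    set φ : ℝ → ℝ := fun z => if z ≤ K then z else 0 with hφ
    have hφm : Measurable φ :=
      Measurable.ite (measurableSet_le measurable_id measurable_const)
        measurable_id measurable_const
    set Y : Fin n → Ω → ℝ := fun i ω => φ (W i ω) with hYdef
    have hYm : ∀ i, Measurable (Y i) := fun i => hφm.comp (hWm i)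
    have hYnn : ∀ i ω, 0 ≤ Y i ω := by
      intro i ω
      simp only [hYdef, hφ]
      split
      · exact hWnn i ω
      · exact le_refl 0
    have hYleK : ∀ i ω, Y i ω ≤ K := by
      intro i ω
      simp only [hYdef, hφ]
      split
      · assumption
      · exact hK0.le
    have hYleW : ∀ i ω, Y i ω ≤ W i ω := by
      intro i ω
      simp only [hYdef, hφ]
      split
      · exact le_refl _
      · exact hWnn i ω
    have hYmem : ∀ i, MemLp (Y i) 2 μ := fun i =>
      MemLp.of_bound (hYm i).aestronglyMeasurable K (ae_of_all μ fun ω => by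
        rw [Real.norm_eq_abs, abs_of_nonneg (hYnn i ω)]; exact hYleK i ω)
    have hYint : ∀ i, Integrable (Y i) μ := fun i => (hYmem i).integrable one_le_two
    have hWint : ∀ i, Integrable (W i) μ := by
      intro i
      by_contra h
      have h0 := integral_undef h
      rw [hmean i] at h0
      norm_num at h0
    -- pointwise bounds
    have hYsq : ∀ i ω, Y i ω ^ 2 ≤ K ^ (1 - δ) * W i ω ^ (1 + δ) := by
      intro i ω
      by_cases h : W i ω ≤ K
      · have hYeq : Y i ω = W i ω := if_pos h
        rw [hYeq]
        rcases eq_or_lt_of_le (hWnn i ω) with h0 | h0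
        · rw [← h0]
          simp [Real.zero_rpow h1δ.ne']
        · have he : W i ω ^ 2 = W i ω ^ (1 - δ) * W i ω ^ (1 + δ) := by
            rw [← Real.rpow_add h0,
              show (1 - δ) + (1 + δ) = ((2:ℕ):ℝ) by push_cast; ring, Real.rpow_natCast]
          rw [he]
          exact mul_le_mul_of_nonneg_right
            (Real.rpow_le_rpow (hWnn i ω) h (by linarith)) (Real.rpow_nonneg (hWnn i ω) _)
      · have hYeq : Y i ω = 0 := if_neg h
        rw [hYeq]
        simpa using mul_nonneg hKm0.le (Real.rpow_nonneg (hWnn i ω) _)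
    have hgap : ∀ i ω, W i ω - Y i ω ≤ W i ω ^ (1 + δ) / K ^ δ := by
      intro i ω
      by_cases h : W i ω ≤ K
      · have hYeq : Y i ω = W i ω := if_pos h
        rw [hYeq, sub_self]
        exact div_nonneg (Real.rpow_nonneg (hWnn i ω) _) hKδ0.le
      · push_neg at h
        have hW0 : 0 < W i ω := hK0.trans h
        have hYeq : Y i ω = 0 := if_neg (not_le.mpr h)
        rw [hYeq, sub_zero, le_div_iff₀ hKδ0]
        have he : W i ω ^ (1 + δ) = W i ω * W i ω ^ δ := by
          rw [Real.rpow_add hW0, Real.rpow_one]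
        rw [he]
        exact mul_le_mul_of_nonneg_left (Real.rpow_le_rpow hK0.le h.le hδ0.le) hW0.le
    -- integral bounds
    have hEY2 : ∀ i, ∫ ω, Y i ω ^ 2 ∂μ ≤ K ^ (1 - δ) * A := by
      intro i
      calc ∫ ω, Y i ω ^ 2 ∂μ ≤ ∫ ω, K ^ (1 - δ) * W i ω ^ (1 + δ) ∂μ := by
            apply integral_mono ((hYmem i).integrable_sq) ((hmom_int i).const_mul _)
            intro ω; exact hYsq i ω
        _ = K ^ (1 - δ) * ∫ ω, W i ω ^ (1 + δ) ∂μ := integral_const_mul _ _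
        _ ≤ K ^ (1 - δ) * A := by
            exact mul_le_mul_of_nonneg_left (momle i) hKm0.le
    have hvarY : ∀ i, variance (Y i) μ ≤ K ^ (1 - δ) * A := by
      intro i
      refine le_trans (variance_le_expectation_sq (hYm i).aestronglyMeasurable) ?_
      have : μ[(Y i) ^ 2] = ∫ ω, Y i ω ^ 2 ∂μ := by
        simp only [Pi.pow_apply]
      rw [this]
      exact hEY2 i
    have hEYub : ∀ i, ∫ ω, Y i ω ∂μ ≤ 1 := by
      intro i
      rw [← hmean i]
      exact integral_mono (hYint i) (hWint i) fun ω => hYleW i ω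
    have hEYlb : ∀ i, 1 - A / K ^ δ ≤ ∫ ω, Y i ω ∂μ := by
      intro i
      have h1 : ∫ ω, (W i ω - Y i ω) ∂μ ≤ A / K ^ δ := by
        calc ∫ ω, (W i ω - Y i ω) ∂μ ≤ ∫ ω, W i ω ^ (1 + δ) / K ^ δ ∂μ := by
              apply integral_mono ((hWint i).sub (hYint i)) ((hmom_int i).div_const _)
              intro ω; exact hgap i ω
          _ = (∫ ω, W i ω ^ (1 + δ) ∂μ) / K ^ δ := integral_div _ _
          _ ≤ A / K ^ δ := by gcongr; exact momle i
      have h2 : ∫ ω, (W i ω - Y i ω) ∂μ = 1 - ∫ ω, Y i ω ∂μ := by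
        rw [integral_sub (hWint i) (hYint i), hmean i]
      linarith
    -- the sum T
    set T : Ω → ℝ := ∑ i, Y i with hT
    have hTapp : ∀ ω, T ω = ∑ i, Y i ω := by
      intro ω; rw [hT]; simp [Finset.sum_apply]
    have hTmem : MemLp T 2 μ := memLp_finset_sum' _ fun i _ => hYmem i
    -- independence of the truncated variables
    have hYindep : iIndepFun Y μ := hindep.comp (fun _ => φ) fun _ => hφm
    have hvarT : variance T μ ≤ (n:ℝ) * (K ^ (1 - δ) * A) := by
      rw [hT, IndepFun.variance_sum (fun i _ => hYmem i)
        (fun i _ j _ hij => hYindep.indepFun hij)]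
      calc (∑ i : Fin n, variance (Y i) μ) ≤ ∑ _i : Fin n, K ^ (1 - δ) * A :=
            Finset.sum_le_sum fun i _ => hvarY i
        _ = (n:ℝ) * (K ^ (1 - δ) * A) := by simp [mul_comm]
    -- mean of T
    have hET : μ[T] = ∑ i, ∫ ω, Y i ω ∂μ := by
      have h' : μ[T] = ∫ ω, ∑ i, Y i ω ∂μ := by
        apply integral_congr_ae
        filter_upwards with ω
        rw [hTapp]
      rw [h', integral_finset_sum _ fun i _ => hYint i]
    have hETub : μ[T] ≤ (n:ℝ) := by
      rw [hET]
      calc (∑ i : Fin n, ∫ ω, Y i ω ∂μ) ≤ ∑ _i : Fin n, (1:ℝ) :=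
            Finset.sum_le_sum fun i _ => hEYub i
        _ = (n:ℝ) := by simp
    have hETlb : (n:ℝ) * (1 - A / K ^ δ) ≤ μ[T] := by
      rw [hET]
      calc (n:ℝ) * (1 - A / K ^ δ) = ∑ _i : Fin n, (1 - A / K ^ δ) := by simp [mul_comm]; ring
        _ ≤ ∑ i : Fin n, ∫ ω, Y i ω ∂μ := Finset.sum_le_sum fun i _ => hEYlb i
    -- the truncation error is small
    have hm8 : A / K ^ δ ≤ 1 / 8 := by
      rw [hKδ]
      rw [div_div_eq_mul_div]
      rw [div_le_div_iff₀ hnδ (by norm_num)]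
      -- A * x * 8 ≤ n^δ  ... from hsmall : 8*x^2*A < n^δ
      rw [h8x] at hsmall
      nlinarith
    -- Chebyshev
    have hc38 : (0:ℝ) < 3 * (n:ℝ) / 8 := by positivity
    have hcheb := meas_ge_le_variance_div_sq (μ := μ) hTmem hc38
    -- per-index tail bound
    have htail : ∀ i : Fin n, μ {ω | ¬ W i ω ≤ K} ≤ ENNReal.ofReal (A / K ^ (1 + δ)) := by
      intro i
      have hsub : {ω | ¬ W i ω ≤ K} ⊆ {ω | K ^ (1 + δ) ≤ W i ω ^ (1 + δ)} := by
        intro ω hω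
        simp only [Set.mem_setOf_eq, not_le] at hω ⊢
        exact Real.rpow_le_rpow hK0.le hω.le h1δ.le
      refine le_trans (measure_mono hsub) (le_trans (markov_ofReal μ
        (Filter.Eventually.of_forall fun ω => Real.rpow_nonneg (hWnn i ω) _)
        (hmom_int i) hK1δ0) ?_)
      exact ENNReal.ofReal_le_ofReal (by gcongr; exact momle i)
    -- main set inclusion
    have hsubset : {ω | (n : ℝ) / 2 ≤ |(∑ i, W i ω) - n|} ⊆
        (⋃ i, {ω | ¬ W i ω ≤ K}) ∪ {ω | 3 * (n:ℝ) / 8 ≤ |T ω - μ[T]|} := by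
      intro ω hω
      simp only [Set.mem_setOf_eq] at hω
      by_cases hall : ∀ i, W i ω ≤ K
      · right
        simp only [Set.mem_setOf_eq]
        have hTS : T ω = ∑ i, W i ω := by
          rw [hTapp]
          refine Finset.sum_congr rfl fun i _ => ?_
          exact if_pos (hall i)
        have htri : |(∑ i, W i ω) - (n:ℝ)| ≤ |(∑ i, W i ω) - μ[T]| + |μ[T] - (n:ℝ)| :=
          abs_sub_le _ _ _
        have habs : |μ[T] - (n:ℝ)| ≤ (n:ℝ) / 8 := by
          rw [abs_le]
          constructor
          · have := hETlb
            have hh : (n:ℝ) * (A / K ^ δ) ≤ (n:ℝ) * (1/8) :=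
              mul_le_mul_of_nonneg_left hm8 hnpos.le
            nlinarith
          · linarith
        rw [hTS]
        linarith
      · left
        push_neg at hall
        obtain ⟨i, hi⟩ := hall
        exact Set.mem_iUnion.mpr ⟨i, by simp only [Set.mem_setOf_eq]; exact not_le.mpr hi⟩
    -- assemble
    calc μ {ω | (n : ℝ) / 2 ≤ |(∑ i, W i ω) - n|}
        ≤ μ ((⋃ i, {ω | ¬ W i ω ≤ K}) ∪ {ω | 3 * (n:ℝ) / 8 ≤ |T ω - μ[T]|}) :=
          measure_mono hsubset
      _ ≤ μ (⋃ i, {ω | ¬ W i ω ≤ K}) + μ {ω | 3 * (n:ℝ) / 8 ≤ |T ω - μ[T]|} :=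
          measure_union_le _ _
      _ ≤ ENNReal.ofReal ((n:ℝ) * (A / K ^ (1 + δ)))
          + ENNReal.ofReal (((n:ℝ) * (K ^ (1 - δ) * A)) / (3 * (n:ℝ) / 8) ^ 2) := by
          gcongr
          · calc μ (⋃ i, {ω | ¬ W i ω ≤ K}) ≤ ∑' i : Fin n, μ {ω | ¬ W i ω ≤ K} :=
                  measure_iUnion_le _
              _ = ∑ i : Fin n, μ {ω | ¬ W i ω ≤ K} := tsum_fintype _
              _ ≤ ∑ _i : Fin n, ENNReal.ofReal (A / K ^ (1 + δ)) :=
                  Finset.sum_le_sum fun i _ => htail i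
              _ = (n : ENNReal) * ENNReal.ofReal (A / K ^ (1 + δ)) := by
                  simp [mul_comm]
              _ = ENNReal.ofReal ((n:ℝ) * (A / K ^ (1 + δ))) := by
                  rw [← ENNReal.ofReal_natCast n, ← ENNReal.ofReal_mul (Nat.cast_nonneg n)]
          · refine le_trans hcheb (ENNReal.ofReal_le_ofReal ?_)
            gcongr
      _ ≤ ENNReal.ofReal (2 ^ (3 + 2 * δ) * A / (n:ℝ) ^ δ) := by
          rw [← ENNReal.ofReal_add (by positivity) (by positivity)]
          apply ENNReal.ofReal_le_ofReal
          rw [h8x, hK1δ, hKm]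
          have h9 : ((3:ℝ) * n / 8) ^ 2 = 9 * (n:ℝ)^2 / 64 := by ring
          rw [h9]
          exact final_alg (n:ℝ) ((n:ℝ) ^ δ) x A hnpos hnδ hx1 hA0
end
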